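/- arXiv:1309.0269 — 4 statements merged into one kernel-verified Lean document; each statement's English description precedes it below -/
import Mathlib

section
/- Let G be a finite connected graph with injective edge weights, and let T be its minimal spanning tree. For any two vertices x and y, the unique path in T from x to y is a minimax path: it minimizes, over all paths from x to y in G, the maximum edge weight along the path. -/
open SimpleGraph

variable {V : Type*}

/-- The total weight of (the edge set of) a graph. -/
noncomputable def graphWeight [Fintype V] (T : SimpleGraph V) (w : Sym2 V → ℝ) : ℝ :=
  ∑ e ∈ T.edgeSet.toFinite.toFinset, w e

/-- `T` is a spanning tree of `G`: a subgraph (on all the vertices) which is a tree. -/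
def IsSpanningTree (G T : SimpleGraph V) : Prop := T ≤ G ∧ T.IsTree

/-- `T` is a minimal spanning tree of `G` with respect to the weights `w`. -/
def IsMST [Fintype V] (G : SimpleGraph V) (w : Sym2 V → ℝ) (T : SimpleGraph V) : Prop :=
  IsSpanningTree G T ∧
    ∀ T' : SimpleGraph V, IsSpanningTree G T' → graphWeight T w ≤ graphWeight T' w

/-!
Every edge `e` of the tree path separates `x` from `y` in `T - e`, so the walk `q` has an edge `f`
joining the two components of `T - e`. Then `T - e + f` is again a spanning tree of `G`, and
minimality of `T` gives `w e ≤ w f`.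
-/

namespace SimpleGraph

variable {G T : SimpleGraph V}

theorem Walk.reachable_deleteEdges_or {a b u v : V} (r : G.Walk u v) :
    (G.deleteEdges {s(a, b)}).Reachable u v ∨ (G.deleteEdges {s(a, b)}).Reachable a v ∨
      (G.deleteEdges {s(a, b)}).Reachable b v := by
  induction r with
  | nil => exact .inl .rfl
  | @cons u u' _ h _ ih =>
    by_cases hab : s(u, u') = s(a, b)
    · rcases Sym2.eq_iff.mp hab with ⟨rfl, rfl⟩ | ⟨rfl, rfl⟩ <;> tauto
    · have hadj : (G.deleteEdges {s(a, b)}).Adj u u' := deleteEdges_adj.mpr ⟨h, hab⟩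
      exact ih.imp_left hadj.reachable.trans

theorem Connected.reachable_deleteEdges_or (hG : G.Connected) (a b v : V) :
    (G.deleteEdges {s(a, b)}).Reachable a v ∨ (G.deleteEdges {s(a, b)}).Reachable b v :=
  ((hG a v).some.reachable_deleteEdges_or).elim .inl id

theorem Connected.connected_deleteEdges_sup_edge (hG : G.Connected) {a b u v : V}
    (hsep : ¬ (G.deleteEdges {s(a, b)}).Reachable u v) :
    (G.deleteEdges {s(a, b)} ⊔ edge u v).Connected := by
  set H := G.deleteEdges {s(a, b)}
  have hHle : H ≤ H ⊔ edge u v := le_sup_left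
  have hne : u ≠ v := by rintro rfl; exact hsep .rfl
  have huv : (H ⊔ edge u v).Reachable u v := Adj.reachable (by simp [edge_adj, hne])
  have hab : (H ⊔ edge u v).Reachable a b := by
    rcases hG.reachable_deleteEdges_or a b u with hu | hu <;>
      rcases hG.reachable_deleteEdges_or a b v with hv | hv
    · exact absurd (hu.symm.trans hv) hsep
    · exact (hu.mono hHle).trans (huv.trans (hv.mono hHle).symm)
    · exact (hv.mono hHle).trans (huv.symm.trans (hu.mono hHle).symm)
    · exact absurd (hu.symm.trans hv) hsep
  refine (connected_iff_exists_forall_reachable _).mpr ⟨a, fun z => ?_⟩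
  rcases hG.reachable_deleteEdges_or a b z with h | h
  exacts [h.mono hHle, hab.trans (h.mono hHle)]

theorem IsAcyclic.not_reachable_deleteEdges_of_mem_edges (hT : T.IsAcyclic) {x y : V}
    {p : T.Walk x y} (hp : p.IsPath) {e : Sym2 V} (he : e ∈ p.edges) :
    ¬ (T.deleteEdges {e}).Reachable x y := by
  classical
  rintro ⟨r⟩
  let r' : T.Walk x y := r.mapLe (T.deleteEdges_le _)
  have hr' : r'.bypass = p := congrArg Subtype.val <|
    (hT.subsingleton_path x y).elim ⟨_, r'.bypass_isPath⟩ ⟨p, hp⟩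
  have : e ∈ r.edges := by simpa [r'] using r'.edges_bypass_subset_edges (hr' ▸ he)
  simpa using r.edges_subset_edgeSet this

end SimpleGraph

open SimpleGraph

theorem graphWeight_deleteEdges_sup_edge [Fintype V] (T : SimpleGraph V) (w : Sym2 V → ℝ)
    {e : Sym2 V} (he : e ∈ T.edgeSet) {u v : V} (huv : u ≠ v)
    (hnew : ¬ (T.deleteEdges {e}).Adj u v) :
    graphWeight (T.deleteEdges {e} ⊔ edge u v) w + w e = graphWeight T w + w s(u, v) := by
  classical
  have hE : (T.deleteEdges {e} ⊔ edge u v).edgeSet.toFinite.toFinset =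
      insert s(u, v) (T.edgeSet.toFinite.toFinset.erase e) := by
    ext f
    simp [edgeSet_edge_of_ne huv, and_comm]
  have hnot : s(u, v) ∉ T.edgeSet.toFinite.toFinset.erase e := by
    simpa [and_comm] using hnew
  have hmem : e ∈ T.edgeSet.toFinite.toFinset := by simpa using he
  rw [graphWeight, hE, Finset.sum_insert hnot, graphWeight,
    ← Finset.sum_erase_add _ w hmem]
  ring

theorem IsMST.weight_le_of_not_reachable_deleteEdges [Fintype V] {G T : SimpleGraph V}
    {w : Sym2 V → ℝ} (hT : IsMST G w T) {e : Sym2 V} (he : e ∈ T.edgeSet) {u v : V}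
    (huv : G.Adj u v) (hsep : ¬ (T.deleteEdges {e}).Reachable u v) : w e ≤ w s(u, v) := by
  obtain ⟨⟨hTG, hTtree⟩, hmin⟩ := hT
  cases e with | h a b
  have hspan : IsSpanningTree G (T.deleteEdges {s(a, b)} ⊔ edge u v) :=
    ⟨sup_le ((T.deleteEdges_le _).trans hTG) ((edge_le_iff G).mpr (.inr huv)),
      hTtree.connected.connected_deleteEdges_sup_edge hsep,
      (hTtree.isAcyclic.anti (T.deleteEdges_le _)).sup_edge_of_not_reachable hsep⟩
  have hweight := graphWeight_deleteEdges_sup_edge T w he huv.ne fun h => hsep h.reachable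
  linarith [hmin _ hspan]

theorem IsMST.exists_mem_edges_weight_le [Fintype V] {G T : SimpleGraph V} {w : Sym2 V → ℝ}
    (hT : IsMST G w T) {x y : V} {p : T.Walk x y} (hp : p.IsPath) {e : Sym2 V}
    (he : e ∈ p.edges) (q : G.Walk x y) : ∃ f ∈ q.edges, w e ≤ w f := by
  have hsep := hT.1.2.isAcyclic.not_reachable_deleteEdges_of_mem_edges hp he
  obtain ⟨d, hd, hdx, hdy⟩ :=
    q.exists_boundary_dart {z | (T.deleteEdges {e}).Reachable x z} .rfl hsep
  exact ⟨d.edge, List.mem_map_of_mem hd, hT.weight_le_of_not_reachable_deleteEdges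
    (p.edges_subset_edgeSet he) d.adj fun h => hdy (hdx.trans h)⟩

theorem mst_path_minimax_general [Fintype V] (G : SimpleGraph V)
    (w : Sym2 V → ℝ)
    (T : SimpleGraph V) (hT : IsMST G w T) (x y : V)
    (p : T.Walk x y) (hp : p.IsPath) (q : G.Walk x y) :
    (p.edges.map w).maximum ≤ (q.edges.map w).maximum := by
  refine List.maximum_le_of_forall_le fun _ hm => ?_
  obtain ⟨e, he, rfl⟩ := List.mem_map.mp hm
  obtain ⟨f, hf, hef⟩ := hT.exists_mem_edges_weight_le hp he q
  exact (WithBot.coe_le_coe.mpr hef).trans (List.le_maximum_of_mem' (List.mem_map_of_mem hf))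

/-- Paths of the minimal spanning tree are minimax: among all paths in `G` between the two
endpoints, they minimize the maximal edge weight. -/
theorem mst_path_minimax [Fintype V] (G : SimpleGraph V) (hG : G.Connected)
    (w : Sym2 V → ℝ) (hw : Set.InjOn w G.edgeSet)
    (T : SimpleGraph V) (hT : IsMST G w T) (x y : V)
    (p : T.Walk x y) (hp : p.IsPath) (q : G.Walk x y) (hq : q.IsPath) :
    (p.edges.map w).maximum ≤ (q.edges.map w).maximum :=
  mst_path_minimax_general G w T hT x y p hp q
end

section
/- Let G be a locally finite connected infinite graph with an injective edge labelling U : E(G) → ℝ. Then the wired minimal spanning forest of G equals the union over all vertices x of the invasion percolation tree started at x: WMSF(G,U) = ⋃_{x ∈ V(G)} InvPerc(x). -/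
open SimpleGraph

variable {V : Type*}

/-- The vertices spanned by the starting vertex `x` together with a set `S` of edges. -/
def spannedVerts (x : V) (S : Set (Sym2 V)) : Set V := {x} ∪ {v | ∃ e ∈ S, v ∈ e}

/-- The edge boundary of a vertex set `A`: edges of `G` with exactly one endpoint in `A`. -/
def edgeBoundary (G : SimpleGraph V) (A : Set V) : Set (Sym2 V) :=
  {e | e ∈ G.edgeSet ∧ ∃ a ∈ A, ∃ b ∉ A, e = s(a, b)}

/-- One step of the invasion process: add the boundary edge of smallest label (if it exists). -/
noncomputable def invStep (G : SimpleGraph V) (U : Sym2 V → ℝ) (x : V) (S : Set (Sym2 V)) :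
    Set (Sym2 V) :=
  letI := Classical.propDecidable
  if h : ∃ e ∈ edgeBoundary G (spannedVerts x S),
      ∀ f ∈ edgeBoundary G (spannedVerts x S), U e ≤ U f
  then insert h.choose S else S

/-- The invasion tree `T_n` after `n` steps, started at `x`. -/
noncomputable def invTree (G : SimpleGraph V) (U : Sym2 V → ℝ) (x : V) : ℕ → Set (Sym2 V)
  | 0 => ∅
  | n + 1 => invStep G U x (invTree G U x n)

/-- The invasion percolation tree of `x`: the union of the invasion trees `T_n`. -/
noncomputable def InvPerc (G : SimpleGraph V) (U : Sym2 V → ℝ) (x : V) : Set (Sym2 V) :=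
  ⋃ n, invTree G U x n

/-- The wired minimal spanning forest: delete from each cycle, and from each bi-infinite simple
path, the edge with the largest label (if it exists). -/
def WMSF (G : SimpleGraph V) (U : Sym2 V → ℝ) : Set (Sym2 V) :=
  {e | e ∈ G.edgeSet ∧
    (¬ ∃ (v : V) (c : G.Walk v v), c.IsCycle ∧ e ∈ c.edges ∧
        ∀ f ∈ c.edges, f ≠ e → U f < U e) ∧
    (¬ ∃ γ : ℤ → V, Function.Injective γ ∧ (∀ i, G.Adj (γ i) (γ (i + 1))) ∧
        (∃ i, e = s(γ i, γ (i + 1))) ∧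
        ∀ i, s(γ i, γ (i + 1)) ≠ e → U s(γ i, γ (i + 1)) < U e)}

/-!
Invasion from `x` adds at each step the cheapest edge leaving the finite set `A` of vertices
reached so far. A cycle or a bi-infinite path through that edge must leave `A` through a second
edge, which is at least as expensive, so invaded edges survive in the WMSF.

Conversely, let `e = s(a, b)` be a WMSF edge invaded neither from `a` nor from `b`. While `b` is
not reached, the invasion from `a` only takes edges cheaper than `e`, and reaching `b` would close
a cycle in which `e` is the most expensive edge; so every edge invaded from `a` (and likewise from
`b`) is cheaper than `e`, and the two invasion trees are vertex-disjoint for the same reason. They are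
infinite because the graph is connected and infinite, so by Kőnig's lemma each contains a ray, and
the two rays joined by `e` form a bi-infinite path in which `e` is the most expensive edge.
-/

open Function

lemma Sym2.finite_setOf_mem {α : Type*} (e : Sym2 α) : {v | v ∈ e}.Finite := by
  induction e with
  | _ a b => exact (Set.toFinite {a, b}).subset fun v hv => Sym2.mem_iff.mp hv

section EdgeBoundary

variable {G : SimpleGraph V} {A : Set V}

lemma mk_mem_edgeBoundary_iff {u v : V} :
    s(u, v) ∈ edgeBoundary G A ↔ G.Adj u v ∧ ¬(u ∈ A ↔ v ∈ A) := by
  constructor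
  · rintro ⟨hadj, a, ha, b, hb, heq⟩
    refine ⟨hadj, ?_⟩
    rcases Sym2.eq_iff.mp heq with ⟨rfl, rfl⟩ | ⟨rfl, rfl⟩ <;> tauto
  · rintro ⟨hadj, huv⟩
    by_cases hu : u ∈ A
    · exact ⟨hadj, u, hu, v, by tauto, rfl⟩
    · exact ⟨hadj, v, by tauto, u, hu, Sym2.eq_swap⟩

lemma edgeBoundary_subset_edgeSet : edgeBoundary G A ⊆ G.edgeSet := fun _ h => h.1

lemma edgeBoundary_finite (hlf : ∀ v, (G.neighborSet v).Finite) (hA : A.Finite) :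
    (edgeBoundary G A).Finite := by
  refine (hA.biUnion fun a _ => (hlf a).image fun b => s(a, b)).subset ?_
  rintro e ⟨he, a, ha, b, -, rfl⟩
  exact Set.mem_biUnion ha ⟨b, he, rfl⟩

lemma SimpleGraph.Walk.exists_mem_edges_edgeBoundary {u v : V} (w : G.Walk u v)
    (h : ¬(u ∈ A ↔ v ∈ A)) : ∃ f ∈ w.edges, f ∈ edgeBoundary G A := by
  induction w with
  | nil => exact absurd Iff.rfl h
  | @cons u b v hadj p ih =>
    by_cases hub : u ∈ A ↔ b ∈ A
    · obtain ⟨f, hf, hfA⟩ := ih fun hbv => h (hub.trans hbv)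
      exact ⟨f, List.mem_cons_of_mem _ hf, hfA⟩
    · exact ⟨s(u, b), List.mem_cons_self .., mk_mem_edgeBoundary_iff.mpr ⟨hadj, hub⟩⟩

lemma edgeBoundary_nonempty [Infinite V] (hG : G.Connected) (hA : A.Finite) {x : V} (hx : x ∈ A) :
    (edgeBoundary G A).Nonempty := by
  obtain ⟨v, hv⟩ := hA.infinite_compl.nonempty
  obtain ⟨f, -, hf⟩ := (hG x v).some.exists_mem_edges_edgeBoundary fun h => hv (h.mp hx)
  exact ⟨f, hf⟩

lemma SimpleGraph.Walk.IsTrail.exists_ne_mem_edgeBoundary {w : V} {c : G.Walk w w}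
    (hc : c.IsTrail) {e : Sym2 V} (he : e ∈ c.edges) (heA : e ∈ edgeBoundary G A) :
    ∃ f ∈ c.edges, f ≠ e ∧ f ∈ edgeBoundary G A := by
  classical
  obtain ⟨-, a, ha, b, hb, rfl⟩ := heA
  have hasupp := c.fst_mem_support_of_mem_edges he
  -- split `c` at `a` and `b` into two edge-disjoint walks, each of which crosses the boundary
  set c' := c.rotate a hasupp
  have hmem : ∀ f, f ∈ c'.edges ↔ f ∈ c.edges := fun f => (c.rotate_edges a hasupp).perm.mem_iff
  have hbsupp : b ∈ c'.support := c'.snd_mem_support_of_mem_edges ((hmem _).mpr he)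
  have hsplit : c'.edges = (c'.takeUntil b hbsupp).edges ++ (c'.dropUntil b hbsupp).edges := by
    rw [← Walk.edges_append, c'.take_spec]
  obtain ⟨f₁, hf₁, hf₁A⟩ :=
    (c'.takeUntil b hbsupp).exists_mem_edges_edgeBoundary (A := A) fun h => hb (h.mp ha)
  obtain ⟨f₂, hf₂, hf₂A⟩ :=
    (c'.dropUntil b hbsupp).exists_mem_edges_edgeBoundary (A := A) fun h => hb (h.mpr ha)
  have hne : f₁ ≠ f₂ := by
    have hnodup := (hc.rotate hasupp).edges_nodup
    rw [hsplit] at hnodup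
    exact fun h => List.disjoint_of_nodup_append hnodup hf₁ (h ▸ hf₂)
  by_cases h₁ : f₁ = s(a, b)
  · refine ⟨f₂, (hmem _).mp ?_, fun h => hne (h₁.trans h.symm), hf₂A⟩
    exact hsplit ▸ List.mem_append_right _ hf₂
  · exact ⟨f₁, (hmem _).mp (hsplit ▸ List.mem_append_left _ hf₁), h₁, hf₁A⟩

lemma exists_mem_Ico_not_iff_succ {P : ℤ → Prop} {a b : ℤ} (hab : a ≤ b) (h : ¬(P a ↔ P b)) :
    ∃ j ∈ Set.Ico a b, ¬(P j ↔ P (j + 1)) := by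
  induction b, hab using Int.leInduction with
  | base => exact absurd Iff.rfl h
  | succ b hab ih =>
    by_cases hb : P a ↔ P b
    · exact ⟨b, ⟨hab, by omega⟩, fun h' => h (hb.trans h')⟩
    · obtain ⟨j, ⟨hj₁, hj₂⟩, hj⟩ := ih hb
      exact ⟨j, ⟨hj₁, by omega⟩, hj⟩

lemma exists_ne_mem_edgeBoundary_of_injective {γ : ℤ → V} (hγ : Injective γ)
    (hadj : ∀ i, G.Adj (γ i) (γ (i + 1))) (hA : A.Finite) {i : ℤ}
    (hi : s(γ i, γ (i + 1)) ∈ edgeBoundary G A) :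
    ∃ j, s(γ j, γ (j + 1)) ≠ s(γ i, γ (i + 1)) ∧ s(γ j, γ (j + 1)) ∈ edgeBoundary G A := by
  have hcross : ¬(γ i ∈ A ↔ γ (i + 1) ∈ A) := (mk_mem_edgeBoundary_iff.mp hi).2
  obtain ⟨m, hm, hmA⟩ : ∃ m, (m = i ∨ m = i + 1) ∧ γ m ∈ A := by
    by_cases h : γ i ∈ A
    · exact ⟨i, .inl rfl, h⟩
    · exact ⟨i + 1, .inr rfl, by tauto⟩
  have hfin : (γ ⁻¹' A).Finite := hA.preimage hγ.injOn
  obtain ⟨lo, hlo⟩ := hfin.bddBelow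
  obtain ⟨up, hup⟩ := hfin.bddAbove
  have hlom := hlo hmA
  have hupm := hup hmA
  have hloA : γ (lo - 1) ∉ A := fun h => by have := hlo h; omega
  have hupA : γ (up + 1) ∉ A := fun h => by have := hup h; omega
  -- `γ` leaves `A` both before and after `m`, so it crosses the boundary on either side of `m`
  obtain ⟨j₁, ⟨-, hj₁⟩, h₁⟩ :=
    exists_mem_Ico_not_iff_succ (P := (γ · ∈ A)) (show lo - 1 ≤ m by omega) (by tauto)
  obtain ⟨j₂, ⟨hj₂, -⟩, h₂⟩ :=
    exists_mem_Ico_not_iff_succ (P := (γ · ∈ A)) (show m ≤ up + 1 by omega) (by tauto)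
  have hne : ∀ j ≠ i, s(γ j, γ (j + 1)) ≠ s(γ i, γ (i + 1)) := by
    intro j hj h
    rcases Sym2.eq_iff.mp h with ⟨h', -⟩ | ⟨h', h''⟩
    · exact hj (hγ h')
    · have := hγ h'
      have := hγ h''
      omega
  by_cases hj : j₁ = i
  · exact ⟨j₂, hne j₂ (by omega), mk_mem_edgeBoundary_iff.mpr ⟨hadj j₂, h₂⟩⟩
  · exact ⟨j₁, hne j₁ hj, mk_mem_edgeBoundary_iff.mpr ⟨hadj j₁, h₁⟩⟩

end EdgeBoundary

section MinimalSpanningForest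

variable {G : SimpleGraph V} {U : Sym2 V → ℝ}

theorem mem_wmsf_of_forall_edgeBoundary_le {A : Set V} (hA : A.Finite) {e : Sym2 V}
    (he : e ∈ edgeBoundary G A) (hmin : ∀ f ∈ edgeBoundary G A, U e ≤ U f) : e ∈ WMSF G U := by
  refine ⟨edgeBoundary_subset_edgeSet he, ?_, ?_⟩
  · rintro ⟨v, c, hc, hec, hmax⟩
    obtain ⟨f, hf, hfe, hfA⟩ := hc.isTrail.exists_ne_mem_edgeBoundary hec he
    exact (hmin f hfA).not_gt (hmax f hf hfe)
  · rintro ⟨γ, hγ, hadj, ⟨i, rfl⟩, hmax⟩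
    obtain ⟨j, hj, hjA⟩ := exists_ne_mem_edgeBoundary_of_injective hγ hadj hA he
    exact (hmin _ hjA).not_gt (hmax j hj)

lemma notMem_wmsf_of_reachable {S : Set (Sym2 V)} {a b : V} (hS : S ⊆ G.edgeSet)
    (hlt : ∀ f ∈ S, U f < U s(a, b)) (hab : (fromEdgeSet S).Reachable a b) :
    s(a, b) ∉ WMSF G U := by
  classical
  rintro ⟨hadj, hcycle, -⟩
  obtain ⟨w⟩ := hab
  have hwS : ∀ f ∈ w.bypass.edges, f ∈ S := fun f hf =>
    ((edgeSet_fromEdgeSet S ▸ w.bypass.edges_subset_edgeSet hf) : f ∈ S \ Sym2.diagSet).1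
  let p := w.bypass.transfer G fun f hf => hS (hwS f hf)
  have hpS : ∀ f ∈ p.edges, f ∈ S := by simpa [p, Walk.edges_transfer] using hwS
  have hnotin : s(b, a) ∉ p.edges := fun h => (hlt _ (hpS _ h)).ne (congrArg U Sym2.eq_swap)
  refine hcycle ⟨b, .cons (G.adj_symm hadj) p, (Walk.cons_isCycle_iff p _).mpr
    ⟨w.bypass_isPath.transfer _, hnotin⟩, by simp [Sym2.eq_swap], fun f hf hfe => ?_⟩
  rcases List.mem_cons.mp hf with rfl | hf
  · exact absurd Sym2.eq_swap hfe
  · exact hlt f (hpS f hf)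

end MinimalSpanningForest

section Invasion

variable {G : SimpleGraph V} {U : Sym2 V → ℝ} {x : V} {S : Set (Sym2 V)}

lemma mem_spannedVerts_self : x ∈ spannedVerts x S := Or.inl rfl

lemma mem_spannedVerts_of_mem {e : Sym2 V} (he : e ∈ S) {v : V} (hv : v ∈ e) :
    v ∈ spannedVerts x S :=
  Or.inr ⟨e, he, hv⟩

lemma spannedVerts_mono {T : Set (Sym2 V)} (h : S ⊆ T) : spannedVerts x S ⊆ spannedVerts x T := by
  rintro v (hv | ⟨e, he, hve⟩)
  · exact Or.inl hv
  · exact mem_spannedVerts_of_mem (h he) hve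

lemma spannedVerts_finite (hS : S.Finite) : (spannedVerts x S).Finite := by
  refine (Set.finite_singleton x).union <|
    (hS.biUnion (t := fun e => {v | v ∈ e}) fun e _ => e.finite_setOf_mem).subset ?_
  rintro v ⟨e, he, hve⟩
  exact Set.mem_biUnion he hve

lemma notMem_of_mem_edgeBoundary_spannedVerts {e : Sym2 V}
    (he : e ∈ edgeBoundary G (spannedVerts x S)) : e ∉ S := by
  obtain ⟨-, a, -, b, hb, rfl⟩ := he
  exact fun h => hb (mem_spannedVerts_of_mem h (Sym2.mem_mk_right a b))

lemma subset_invStep : S ⊆ invStep G U x S := by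
  unfold invStep
  split_ifs
  exacts [Set.subset_insert _ _, subset_rfl]

lemma mem_edgeBoundary_of_mem_invStep {e : Sym2 V} (he : e ∈ invStep G U x S) (heS : e ∉ S) :
    e ∈ edgeBoundary G (spannedVerts x S) ∧
      ∀ f ∈ edgeBoundary G (spannedVerts x S), U e ≤ U f := by
  unfold invStep at he
  split_ifs at he with h
  · rcases he with rfl | he
    exacts [h.choose_spec, absurd he heS]
  · exact absurd he heS

lemma exists_mem_invStep_notMem (hfin : (edgeBoundary G (spannedVerts x S)).Finite)
    (hne : (edgeBoundary G (spannedVerts x S)).Nonempty) : ∃ e ∈ invStep G U x S, e ∉ S := by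
  obtain ⟨e, he, hmin⟩ := Set.exists_min_image _ U hfin hne
  have h : ∃ e ∈ edgeBoundary G (spannedVerts x S),
      ∀ f ∈ edgeBoundary G (spannedVerts x S), U e ≤ U f := ⟨e, he, hmin⟩
  refine ⟨h.choose, ?_, notMem_of_mem_edgeBoundary_spannedVerts h.choose_spec.1⟩
  unfold invStep
  rw [dif_pos h]
  exact Set.mem_insert _ _

lemma invTree_mono : Monotone (invTree G U x) :=
  monotone_nat_of_le_succ fun _ => subset_invStep

lemma invTree_subset_invPerc (n : ℕ) : invTree G U x n ⊆ InvPerc G U x :=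
  Set.subset_iUnion (invTree G U x) n

lemma invTree_finite (n : ℕ) : (invTree G U x n).Finite := by
  induction n with
  | zero => exact Set.finite_empty
  | succ n ih =>
    change (invStep G U x _).Finite
    unfold invStep
    split_ifs
    exacts [ih.insert _, ih]

lemma invTree_subset_edgeSet (n : ℕ) : invTree G U x n ⊆ G.edgeSet := by
  induction n with
  | zero => exact Set.empty_subset _
  | succ n ih =>
    intro e he
    by_cases heT : e ∈ invTree G U x n
    · exact ih heT
    · exact edgeBoundary_subset_edgeSet (mem_edgeBoundary_of_mem_invStep he heT).1

lemma invPerc_subset_edgeSet : InvPerc G U x ⊆ G.edgeSet :=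
  Set.iUnion_subset invTree_subset_edgeSet

lemma fromEdgeSet_invPerc_le : fromEdgeSet (InvPerc G U x) ≤ G :=
  fun _ _ h => invPerc_subset_edgeSet ((fromEdgeSet_adj _).mp h).1

lemma exists_mem_invTree_succ_notMem {e : Sym2 V} (he : e ∈ InvPerc G U x) :
    ∃ n, e ∈ invTree G U x (n + 1) ∧ e ∉ invTree G U x n := by
  obtain ⟨m, hm⟩ := Set.mem_iUnion.mp he
  induction m with
  | zero => exact absurd hm (Set.notMem_empty e)
  | succ m ih =>
    by_cases h : e ∈ invTree G U x m
    exacts [ih h, ⟨m, hm, h⟩]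

lemma reachable_of_mem_spannedVerts_invTree {n : ℕ} {v : V}
    (hv : v ∈ spannedVerts x (invTree G U x n)) :
    (fromEdgeSet (invTree G U x n)).Reachable x v := by
  induction n generalizing v with
  | zero =>
    rcases hv with hvx | ⟨e, he, -⟩
    exacts [hvx ▸ .refl _, absurd he (Set.notMem_empty e)]
  | succ n ih =>
    have hmono := fromEdgeSet_mono (invTree_mono (G := G) (U := U) (x := x) n.le_succ)
    rcases hv with hvx | ⟨e, he, hve⟩
    · exact hvx ▸ .refl _
    by_cases heT : e ∈ invTree G U x n
    · exact (ih (mem_spannedVerts_of_mem heT hve)).mono hmono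
    obtain ⟨⟨hadj, a, ha, b, -, rfl⟩, -⟩ := mem_edgeBoundary_of_mem_invStep he heT
    have hab : (fromEdgeSet (invTree G U x (n + 1))).Adj a b :=
      (fromEdgeSet_adj _).mpr ⟨he, G.ne_of_adj hadj⟩
    rcases Sym2.mem_iff.mp hve with rfl | rfl
    · exact (ih ha).mono hmono
    · exact ((ih ha).mono hmono).trans hab.reachable

theorem invPerc_subset_wmsf : InvPerc G U x ⊆ WMSF G U := by
  intro e he
  obtain ⟨n, hn, hn'⟩ := exists_mem_invTree_succ_notMem he
  obtain ⟨hA, hmin⟩ := mem_edgeBoundary_of_mem_invStep hn hn'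
  exact mem_wmsf_of_forall_edgeBoundary_le (spannedVerts_finite (invTree_finite n)) hA hmin

lemma spannedVerts_invTree_ssubset_succ [Infinite V] (hG : G.Connected)
    (hlf : ∀ v, (G.neighborSet v).Finite) (n : ℕ) :
    spannedVerts x (invTree G U x n) ⊂ spannedVerts x (invTree G U x (n + 1)) := by
  have hA := spannedVerts_finite (x := x) (invTree_finite (G := G) (U := U) (x := x) n)
  obtain ⟨e, he, heT⟩ := exists_mem_invStep_notMem (U := U)
    (edgeBoundary_finite hlf hA) (edgeBoundary_nonempty hG hA mem_spannedVerts_self)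
  obtain ⟨⟨-, a, -, b, hb, rfl⟩, -⟩ := mem_edgeBoundary_of_mem_invStep he heT
  exact (Set.ssubset_iff_of_subset (spannedVerts_mono (invTree_mono n.le_succ))).mpr
    ⟨b, mem_spannedVerts_of_mem he (Sym2.mem_mk_right a b), hb⟩

lemma infinite_setOf_reachable_invPerc [Infinite V] (hG : G.Connected)
    (hlf : ∀ v, (G.neighborSet v).Finite) :
    {v | (fromEdgeSet (InvPerc G U x)).Reachable x v}.Infinite := by
  have hmono :=
    strictMono_nat_of_lt_succ (spannedVerts_invTree_ssubset_succ (U := U) (x := x) hG hlf)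
  refine (Set.infinite_iUnion hmono.injective).mono (Set.iUnion_subset fun n v hv => ?_)
  exact (reachable_of_mem_spannedVerts_invTree hv).mono
    (fromEdgeSet_mono (invTree_subset_invPerc n))

lemma invTree_lt_of_mem_wmsf (hU : Set.InjOn U G.edgeSet) {y : V} (he : s(x, y) ∈ WMSF G U)
    (hx : s(x, y) ∉ InvPerc G U x) (n : ℕ) :
    y ∉ spannedVerts x (invTree G U x n) ∧ ∀ f ∈ invTree G U x n, U f < U s(x, y) := by
  have hxy : G.Adj x y := he.1
  induction n with
  | zero =>
    refine ⟨?_, fun f hf => absurd hf (Set.notMem_empty f)⟩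
    rintro (h | ⟨f, hf, -⟩)
    exacts [G.ne_of_adj hxy h.symm, absurd hf (Set.notMem_empty f)]
  | succ n ih =>
    have hlt : ∀ f ∈ invTree G U x (n + 1), U f < U s(x, y) := by
      intro f hf
      by_cases hfT : f ∈ invTree G U x n
      · exact ih.2 f hfT
      obtain ⟨hfA, hmin⟩ := mem_edgeBoundary_of_mem_invStep hf hfT
      have hne : f ≠ s(x, y) := fun h => hx (h ▸ invTree_subset_invPerc _ hf)
      have heA : s(x, y) ∈ edgeBoundary G (spannedVerts x (invTree G U x n)) :=
        mk_mem_edgeBoundary_iff.mpr ⟨hxy, fun h => ih.1 (h.mp mem_spannedVerts_self)⟩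
      exact (hmin _ heA).lt_of_ne fun h => hne (hU (edgeBoundary_subset_edgeSet hfA) he.1 h)
    -- reaching `y` would close a cycle in which `s(x, y)` is the most expensive edge
    exact ⟨fun hy => notMem_wmsf_of_reachable (invTree_subset_edgeSet _) hlt
      (reachable_of_mem_spannedVerts_invTree hy) he, hlt⟩

lemma lt_of_mem_invPerc_of_mem_wmsf (hU : Set.InjOn U G.edgeSet) {y : V}
    (he : s(x, y) ∈ WMSF G U) (hx : s(x, y) ∉ InvPerc G U x) {f : Sym2 V}
    (hf : f ∈ InvPerc G U x) : U f < U s(x, y) := by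
  obtain ⟨n, hn⟩ := Set.mem_iUnion.mp hf
  exact (invTree_lt_of_mem_wmsf hU he hx n).2 f hn

end Invasion

section Konig

variable {H : SimpleGraph V} {x : V}

def geodesicCone (H : SimpleGraph V) (x v : V) : Set V :=
  {w | H.Reachable x w ∧ H.dist x w = H.dist x v + H.dist v w}

lemma exists_adj_infinite_geodesicCone (hlf : ∀ v, (H.neighborSet v).Finite) {v : V}
    (hv : H.Reachable x v) (hinf : (geodesicCone H x v).Infinite) :
    ∃ u, H.Adj v u ∧ H.dist x u = H.dist x v + 1 ∧ (geodesicCone H x u).Infinite := by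
  have hcover : geodesicCone H x v \ {v} ⊆
      ⋃ u ∈ {u | H.Adj v u ∧ H.dist x u = H.dist x v + 1}, geodesicCone H x u := by
    rintro w ⟨⟨hxw, hw⟩, hwv⟩
    obtain ⟨p, hp⟩ := (hv.symm.trans hxw).exists_walk_length_eq_dist
    cases p with
    | nil => exact (hwv rfl).elim
    | @cons _ u _ hadj q =>
      have hxu := hv.dist_triangle_left u
      have hxuw := (hv.trans hadj.reachable).dist_triangle_left w
      have huw := dist_le q
      rw [dist_eq_one_iff_adj.mpr hadj] at hxu
      rw [Walk.length_cons] at hp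
      exact Set.mem_biUnion (x := u) ⟨hadj, by omega⟩ ⟨hxw, by omega⟩
  by_contra! hfin
  refine hinf (Set.Finite.of_sdiff (Set.Finite.subset ?_ hcover) (Set.finite_singleton v))
  exact ((hlf v).subset fun u hu => hu.1).biUnion fun u hu => hfin u hu.1 hu.2

/-- Kőnig's lemma: step to a neighbour one further from `x` whose geodesic cone is still
infinite; the distance to `x` grows by one at each step, so the ray is injective. -/
theorem exists_injective_ray (hlf : ∀ v, (H.neighborSet v).Finite)
    (hinf : {v | H.Reachable x v}.Infinite) :
    ∃ γ : ℕ → V, γ 0 = x ∧ Injective γ ∧ ∀ n, H.Adj (γ n) (γ (n + 1)) := by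
  let S := {v | H.Reachable x v ∧ (geodesicCone H x v).Infinite}
  have hstep : ∀ v : S, ∃ u : S, H.Adj v u ∧ H.dist x u = H.dist x v + 1 := by
    rintro ⟨v, hv, hvinf⟩
    obtain ⟨u, hadj, hdist, hu⟩ := exists_adj_infinite_geodesicCone hlf hv hvinf
    exact ⟨⟨u, hv.trans hadj.reachable, hu⟩, hadj, hdist⟩
  choose next hadj hdist using hstep
  have hx : x ∈ S := ⟨.refl x, by simpa [geodesicCone] using hinf⟩
  let γ (n : ℕ) : V := next^[n] ⟨x, hx⟩
  have hγ : ∀ n, H.dist x (γ n) = n := by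
    intro n
    induction n with
    | zero => simp [γ]
    | succ n ih =>
      change H.dist x (next^[n + 1] ⟨x, hx⟩ : S) = n + 1
      rw [iterate_succ_apply', hdist]
      exact congrArg (· + 1) ih
  refine ⟨γ, rfl, fun m n h => by simpa [hγ] using congrArg (H.dist x) h, fun n => ?_⟩
  simpa only [γ, iterate_succ_apply'] using hadj _

lemma reachable_of_forall_adj_succ {γ : ℕ → V} (hadj : ∀ n, H.Adj (γ n) (γ (n + 1))) (n : ℕ) :
    H.Reachable (γ 0) (γ n) := by
  induction n with
  | zero => rfl
  | succ n ih => exact ih.trans (hadj n).reachable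

end Konig

section JoinRays

/-- The bi-infinite sequence `…, f 1, f 0, g 0, g 1, …`, with `g 0` at index `0`. -/
def joinRays (f g : ℕ → V) : ℤ → V
  | Int.ofNat n => g n
  | Int.negSucc n => f n

variable {f g : ℕ → V}

lemma joinRays_injective (hf : Injective f) (hg : Injective g) (hfg : ∀ m n, f m ≠ g n) :
    Injective (joinRays f g) := by
  rintro (m | m) (n | n) h
  · exact congrArg _ (hg h)
  · exact (hfg _ _ h.symm).elim
  · exact (hfg _ _ h).elim
  · exact congrArg _ (hf h)

lemma joinRays_succ {P : V → V → Prop} (hf : ∀ n, P (f (n + 1)) (f n)) (hfg : P (f 0) (g 0))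
    (hg : ∀ n, P (g n) (g (n + 1))) : ∀ i, P (joinRays f g i) (joinRays f g (i + 1))
  | Int.ofNat n => hg n
  | Int.negSucc 0 => hfg
  | Int.negSucc (n + 1) => hf n

end JoinRays

section

variable {G : SimpleGraph V} {U : Sym2 V → ℝ}

lemma exists_ray_invPerc [Infinite V] (hG : G.Connected) (hlf : ∀ v, (G.neighborSet v).Finite)
    (x : V) : ∃ γ : ℕ → V, γ 0 = x ∧ Injective γ ∧
      ∀ n, (fromEdgeSet (InvPerc G U x)).Adj (γ n) (γ (n + 1)) :=
  exists_injective_ray (fun v => (hlf v).subset fun _ hu => fromEdgeSet_invPerc_le hu)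
    (infinite_setOf_reachable_invPerc hG hlf)

theorem wmsf_subset_iUnion_invPerc [Infinite V] (hG : G.Connected)
    (hlf : ∀ v, (G.neighborSet v).Finite) (hU : Set.InjOn U G.edgeSet) :
    WMSF G U ⊆ ⋃ x, InvPerc G U x := by
  intro e he
  induction e with | _ a b => ?_
  by_contra hnot
  simp only [Set.mem_iUnion, not_exists] at hnot
  have hlt : ∀ f ∈ InvPerc G U a ∪ InvPerc G U b, U f < U s(a, b) := by
    rintro f (hf | hf)
    · exact lt_of_mem_invPerc_of_mem_wmsf hU he (hnot a) hf
    · rw [Sym2.eq_swap] at he hnot ⊢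
      exact lt_of_mem_invPerc_of_mem_wmsf hU he (hnot b) hf
  have hS : InvPerc G U a ∪ InvPerc G U b ⊆ G.edgeSet :=
    Set.union_subset invPerc_subset_edgeSet invPerc_subset_edgeSet
  obtain ⟨γa, hγa0, hγa, hadja⟩ := exists_ray_invPerc (U := U) hG hlf a
  obtain ⟨γb, hγb0, hγb, hadjb⟩ := exists_ray_invPerc (U := U) hG hlf b
  -- a common vertex would join `a` to `b` through edges cheaper than `s(a, b)`
  have hdisj : ∀ m n, γa m ≠ γb n := by
    intro m n h
    refine notMem_wmsf_of_reachable hS hlt ?_ he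
    have ha := (reachable_of_forall_adj_succ hadja m).mono
      (fromEdgeSet_mono (Set.subset_union_left (t := InvPerc G U b)))
    have hb := (reachable_of_forall_adj_succ hadjb n).mono
      (fromEdgeSet_mono (Set.subset_union_right (s := InvPerc G U a)))
    rw [hγa0, h] at ha
    rw [hγb0] at hb
    exact ha.trans hb.symm
  have hmem : ∀ {x} {u v : V}, (fromEdgeSet (InvPerc G U x)).Adj u v → s(u, v) ∈ InvPerc G U x :=
    fun h => ((fromEdgeSet_adj _).mp h).1
  refine he.2.2 ⟨joinRays γa γb, joinRays_injective hγa hγb hdisj,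
    joinRays_succ (fun n => (fromEdgeSet_invPerc_le (hadja n)).symm)
      (by rw [hγa0, hγb0]; exact he.1) fun n => fromEdgeSet_invPerc_le (hadjb n),
    ⟨Int.negSucc 0, show s(a, b) = s(γa 0, γb 0) by rw [hγa0, hγb0]⟩,
    joinRays_succ (P := fun u v => s(u, v) ≠ s(a, b) → U s(u, v) < U s(a, b))
      (fun n _ => ?_) (fun h => (h (by rw [hγa0, hγb0])).elim)
      fun n _ => hlt _ (.inr (hmem (hadjb n)))⟩
  rw [Sym2.eq_swap]
  exact hlt _ (.inl (hmem (hadja n)))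

end

/-- On a locally finite connected infinite graph with injective edge labels, the wired minimal
spanning forest is the union of the invasion percolation trees of all vertices. -/
theorem wmsf_eq_union_invPerc [Infinite V] (G : SimpleGraph V) (hG : G.Connected)
    (hlf : ∀ v : V, (G.neighborSet v).Finite)
    (U : Sym2 V → ℝ) (hU : Set.InjOn U G.edgeSet) :
    WMSF G U = ⋃ x : V, InvPerc G U x :=
  (wmsf_subset_iUnion_invPerc hG hlf hU).antisymm (Set.iUnion_subset fun _ => invPerc_subset_wmsf)
end

section
/- Let G be a finite connected planar graph embedded in the plane (or torus) with injective edge weights w, and let G* be its planar dual with the dual edge e* given weight w(e). Then the edges dual to the complement of the minimal spanning tree of G form the maximal spanning tree of G*: e ∈ MST(G, w) if and only if e* ∉ MaxST(G*, w). -/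
/-!
Taking complements and transporting along `φ` reverses weights: the dual of the complement of a
spanning tree `T` of `G` weighs `w(G) - w(T)`. So the preimage of the complement of the maximal
spanning tree `Td` of `G'` is a spanning tree of `G` of weight at most `w(T)`, hence a minimal
one. With injective weights the minimal spanning tree is unique: if `e` is the cheapest edge on
which two minimal trees differ, say `e ∈ T \ T'`, the cycle that `e` closes in `T'` has an edge
`f ∉ T`, and minimality of `T'` forces `w f ≤ w e`, whence `f = e`, which is absurd.
-/

open SimpleGraph

variable {V : Type*}

open scoped symmDiff

namespace SimpleGraph

theorem IsAcyclic.mem_edges_of_adj {T : SimpleGraph V} (hT : T.IsAcyclic) {a b : V}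
    (hab : T.Adj a b) (p : T.Walk a b) : s(a, b) ∈ p.edges := by
  by_contra h
  exact isBridge_iff.1 (isAcyclic_iff_forall_isBridge.1 hT hab)
    (reachable_deleteEdges_iff_exists_walk.2 ⟨p, h⟩)

theorem edgeSet_fromEdgeSet_of_subset {G : SimpleGraph V} {s : Set (Sym2 V)}
    (hs : s ⊆ G.edgeSet) : (fromEdgeSet s).edgeSet = s := by
  rw [edgeSet_fromEdgeSet, sdiff_eq_self_iff_disjoint, Set.disjoint_left]
  exact fun e hd he => G.not_isDiag_of_mem_edgeSet (hs he) hd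

theorem edgeSet_sup_edge_deleteEdges (G : SimpleGraph V) {a b : V} (hab : a ≠ b) (f : Sym2 V) :
    ((G ⊔ edge a b).deleteEdges {f}).edgeSet = insert s(a, b) G.edgeSet \ {f} := by
  ext e
  by_cases he : e = s(a, b) <;> simp [he, hab, edgeSet_sup, edgeSet_edge]

theorem IsTree.sup_edge_deleteEdges [Finite V] {T : SimpleGraph V} (hT : T.IsTree) {a b : V}
    (hab : ¬ T.Adj a b) {p : T.Walk a b} (hp : p.IsPath) {f : Sym2 V} (hf : f ∈ p.edges) :
    ((T ⊔ edge a b).deleteEdges {f}).IsTree := by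
  obtain rfl | hne := eq_or_ne a b
  · simp [(Walk.isPath_iff_nil.1 hp).eq_nil] at hf
  set H := T ⊔ edge a b
  have hHp : ∀ e ∈ p.edges, e ∈ H.edgeSet :=
    fun e he => edgeSet_mono le_sup_left (p.edges_subset_edgeSet he)
  have hHba : H.Adj b a := by simp [H, edge_adj, hne.symm]
  -- `f` lies on the cycle closed by the new edge, so deleting it keeps `H` connected
  have hcyc : (Walk.cons hHba (p.transfer H hHp)).IsCycle := by
    refine Path.cons_isCycle ⟨_, hp.transfer hHp⟩ hHba ?_
    simpa [Walk.edges_transfer, Sym2.eq_swap] using fun h => hab (p.adj_of_mem_edges h)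
  have hbridge : ¬ H.IsBridge f :=
    fun h => h.notMem_edges_of_isCycle hcyc (by simp [Walk.edges_transfer, hf])
  rw [isTree_iff_connected_and_card]
  constructor
  · obtain ⟨x, y⟩ := f
    exact (hT.connected.mono le_sup_left).connected_delete_edge_of_not_isBridge hbridge
  · have hcard := (isTree_iff_connected_and_card.1 hT).2
    have hfT : f ∈ insert s(a, b) T.edgeSet := Or.inr (p.edges_subset_edgeSet hf)
    rw [Nat.card_coe_set_eq] at hcard ⊢
    rw [edgeSet_sup_edge_deleteEdges T hne, Set.ncard_sdiff_singleton_add_one hfT,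
      Set.ncard_insert_of_notMem (show s(a, b) ∉ T.edgeSet from hab), hcard]

end SimpleGraph

theorem graphWeight_eq_finsum [Fintype V] (T : SimpleGraph V) (w : Sym2 V → ℝ) :
    graphWeight T w = ∑ᶠ e ∈ T.edgeSet, w e :=
  (finsum_mem_eq_finite_toFinset_sum w _).symm

theorem graphWeight_sup_edge_deleteEdges [Fintype V] {T : SimpleGraph V} (w : Sym2 V → ℝ)
    {a b : V} (hab : a ≠ b) (hnab : ¬ T.Adj a b) {f : Sym2 V} (hf : f ∈ T.edgeSet) :
    graphWeight ((T ⊔ edge a b).deleteEdges {f}) w = graphWeight T w + w s(a, b) - w f := by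
  have hsplit := finsum_mem_add_sdiff (f := w)
    (Set.singleton_subset_iff.2 (Set.mem_insert_of_mem s(a, b) hf)) (Set.toFinite _)
  rw [finsum_mem_singleton, finsum_mem_insert w hnab (Set.toFinite _)] at hsplit
  rw [graphWeight_eq_finsum, graphWeight_eq_finsum, edgeSet_sup_edge_deleteEdges T hab]
  linarith

theorem graphWeight_fromEdgeSet_image_sdiff [Fintype V] {V' : Type*} [Fintype V']
    {G T : SimpleGraph V} {G' : SimpleGraph V'} {φ : Sym2 V → Sym2 V'}
    (hφ : Set.InjOn φ G.edgeSet) (hφG : Set.MapsTo φ G.edgeSet G'.edgeSet)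
    {w : Sym2 V → ℝ} {w' : Sym2 V' → ℝ} (hww' : ∀ e ∈ G.edgeSet, w' (φ e) = w e)
    (hTG : T ≤ G) :
    graphWeight (fromEdgeSet (φ '' (G.edgeSet \ T.edgeSet))) w' =
      graphWeight G w - graphWeight T w := by
  rw [graphWeight_eq_finsum, graphWeight_eq_finsum, graphWeight_eq_finsum,
    edgeSet_fromEdgeSet_of_subset (hφG.mono_left Set.sdiff_subset).image_subset,
    finsum_mem_image (hφ.mono Set.sdiff_subset),
    finsum_mem_congr rfl fun e he => hww' e he.1, eq_sub_iff_add_eq',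
    finsum_mem_add_sdiff (edgeSet_mono hTG) (Set.toFinite _)]

theorem fromEdgeSet_image_sdiff_preimage {V' : Type*} {G : SimpleGraph V}
    {G' Td : SimpleGraph V'} {φ : Sym2 V → Sym2 V'} (hφ : Set.SurjOn φ G.edgeSet G'.edgeSet)
    (hTd : Td ≤ G') :
    fromEdgeSet (φ '' (G.edgeSet \ (fromEdgeSet (G.edgeSet \ φ ⁻¹' Td.edgeSet)).edgeSet)) =
      Td := by
  rw [edgeSet_fromEdgeSet_of_subset Set.sdiff_subset, Set.sdiff_sdiff_right_self,
    Set.image_inter_preimage, Set.inter_eq_right.2 ((edgeSet_mono hTd).trans hφ),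
    fromEdgeSet_edgeSet]

theorem IsMST.weight_le_of_mem_edges [Fintype V] {G T : SimpleGraph V} {w : Sym2 V → ℝ}
    (hT : IsMST G w T) {a b : V} (hab : G.Adj a b) (hnab : ¬ T.Adj a b) {p : T.Walk a b}
    (hp : p.IsPath) {f : Sym2 V} (hf : f ∈ p.edges) : w f ≤ w s(a, b) := by
  have hswap : IsSpanningTree G ((T ⊔ edge a b).deleteEdges {f}) :=
    ⟨(deleteEdges_le _).trans (sup_le hT.1.1 ((edge_le_iff G).2 (Or.inr hab))),
      hT.1.2.sup_edge_deleteEdges hnab hp hf⟩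
  have hmin := hT.2 _ hswap
  rw [graphWeight_sup_edge_deleteEdges w hab.ne hnab (p.edges_subset_edgeSet hf)] at hmin
  linarith

theorem IsMST.exists_weight_le_of_mem_sdiff [Fintype V] {G T T' : SimpleGraph V}
    {w : Sym2 V → ℝ} (hT : IsSpanningTree G T) (hT' : IsMST G w T') {e : Sym2 V}
    (heT : e ∈ T.edgeSet) (heT' : e ∉ T'.edgeSet) :
    ∃ f ∈ T'.edgeSet \ T.edgeSet, w f ≤ w e := by
  obtain ⟨a, b⟩ := e
  obtain ⟨p, hp⟩ := hT'.1.2.connected.exists_isPath a b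
  obtain ⟨f, hfp, hfT⟩ : ∃ f ∈ p.edges, f ∉ T.edgeSet := by
    by_contra! hsub
    have := hT.2.isAcyclic.mem_edges_of_adj heT (p.transfer T hsub)
    exact heT' (p.edges_subset_edgeSet (by simpa [Walk.edges_transfer] using this))
  exact ⟨f, ⟨p.edges_subset_edgeSet hfp, hfT⟩,
    hT'.weight_le_of_mem_edges (hT.1 heT) heT' hp hfp⟩

theorem IsMST.eq_of_injOn [Fintype V] {G T T' : SimpleGraph V} {w : Sym2 V → ℝ}
    (hw : Set.InjOn w G.edgeSet) (hT : IsMST G w T) (hT' : IsMST G w T') : T = T' := by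
  by_contra hne
  obtain ⟨e, he, hmin⟩ := Set.exists_min_image _ w (Set.toFinite _)
    (Set.symmDiff_nonempty.2 (edgeSet_inj.not.2 hne))
  have hG : T.edgeSet ∆ T'.edgeSet ⊆ G.edgeSet :=
    Set.union_subset (Set.sdiff_subset.trans (edgeSet_mono hT.1.1))
      (Set.sdiff_subset.trans (edgeSet_mono hT'.1.1))
  have heq : ∀ f ∈ T.edgeSet ∆ T'.edgeSet, w f ≤ w e → f = e :=
    fun f hf hfe => hw (hG hf) (hG he) (hfe.antisymm (hmin f hf))
  rcases he with ⟨heT, heT'⟩ | ⟨heT', heT⟩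
  · obtain ⟨f, hf, hfe⟩ := hT'.exists_weight_le_of_mem_sdiff hT.1 heT heT'
    exact heT' (heq f (Or.inr hf) hfe ▸ hf.1)
  · obtain ⟨f, hf, hfe⟩ := hT.exists_weight_le_of_mem_sdiff hT'.1 heT' heT
    exact heT (heq f (Or.inl hf) hfe ▸ hf.1)

/-- The duality of the two embedded graphs is encoded by a bijection `φ` between the edge sets
under which the complements of spanning trees of `G` correspond exactly to spanning trees of
`G'`. -/
theorem mst_dual_maxst_general {V' : Type*} [Fintype V] [Fintype V']
    (G : SimpleGraph V) (G' : SimpleGraph V')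
    (φ : Sym2 V → Sym2 V') (hφ : Set.BijOn φ G.edgeSet G'.edgeSet)
    (hdual : ∀ T : SimpleGraph V, T ≤ G →
      (IsSpanningTree G T ↔
        IsSpanningTree G' (SimpleGraph.fromEdgeSet (φ '' (G.edgeSet \ T.edgeSet)))))
    (w : Sym2 V → ℝ) (hw : Set.InjOn w G.edgeSet)
    (w' : Sym2 V' → ℝ)
    (hww' : ∀ e ∈ G.edgeSet, w' (φ e) = w e)
    (T : SimpleGraph V) (hT : IsMST G w T)
    (Td : SimpleGraph V') (hTd : IsSpanningTree G' Td ∧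
      ∀ S : SimpleGraph V', IsSpanningTree G' S → graphWeight S w' ≤ graphWeight Td w') :
    ∀ e ∈ G.edgeSet, (e ∈ T.edgeSet ↔ φ e ∉ Td.edgeSet) := by
  set T₂ := fromEdgeSet (G.edgeSet \ φ ⁻¹' Td.edgeSet)
  have hT₂G : T₂ ≤ G := (fromEdgeSet_le G).2 (Set.sdiff_subset.trans Set.sdiff_subset)
  have hTd_eq := fromEdgeSet_image_sdiff_preimage hφ.surjOn hTd.1.1
  have hT₂ : IsSpanningTree G T₂ := (hdual T₂ hT₂G).2 (hTd_eq ▸ hTd.1)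
  have hle : graphWeight T₂ w ≤ graphWeight T w := by
    have hmax := hTd.2 _ ((hdual T hT.1.1).1 hT.1)
    rw [← hTd_eq, graphWeight_fromEdgeSet_image_sdiff hφ.injOn hφ.mapsTo hww' hT.1.1,
      graphWeight_fromEdgeSet_image_sdiff hφ.injOn hφ.mapsTo hww' hT₂G] at hmax
    linarith
  obtain rfl : T = T₂ := hT.eq_of_injOn hw ⟨hT₂, fun S hS => hle.trans (hT.2 S hS)⟩
  intro e he
  simp [T₂, he]

/-- Planar duality for minimal spanning trees: if `G` and `G'` are plane duals, with dual edges
carrying the same weight, then an edge belongs to the minimal spanning tree of `G` iff its dual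
edge does not belong to the maximal spanning tree of `G'`. The duality of the two embedded
graphs is encoded by a bijection `φ` between the edge sets under which the complements of
spanning trees of `G` correspond exactly to spanning trees of `G'`. -/
theorem mst_dual_maxst {V' : Type*} [Fintype V] [Fintype V']
    (G : SimpleGraph V) (G' : SimpleGraph V') (hG : G.Connected) (hG' : G'.Connected)
    (φ : Sym2 V → Sym2 V') (hφ : Set.BijOn φ G.edgeSet G'.edgeSet)
    (hdual : ∀ T : SimpleGraph V, T ≤ G →
      (IsSpanningTree G T ↔
        IsSpanningTree G' (SimpleGraph.fromEdgeSet (φ '' (G.edgeSet \ T.edgeSet)))))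
    (w : Sym2 V → ℝ) (hw : Set.InjOn w G.edgeSet)
    (w' : Sym2 V' → ℝ) (hw' : Set.InjOn w' G'.edgeSet)
    (hww' : ∀ e ∈ G.edgeSet, w' (φ e) = w e)
    (T : SimpleGraph V) (hT : IsMST G w T)
    (Td : SimpleGraph V') (hTd : IsSpanningTree G' Td ∧
      ∀ S : SimpleGraph V', IsSpanningTree G' S → graphWeight S w' ≤ graphWeight Td w') :
    ∀ e ∈ G.edgeSet, (e ∈ T.edgeSet ↔ φ e ∉ Td.edgeSet) :=
  mst_dual_maxst_general G G' φ hφ hdual w hw w' hww' T hT Td hTd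
end

section
/- Let G be a finite connected graph with injective edge weights w, and let p ∈ ℝ. Suppose every p-cluster of G is joined to every other via the contracted graph G^p whose minimal spanning tree is T^p. Then for any two distinct p-clusters C₁ and C₂, there is a unique path in the minimal spanning tree T of G connecting C₁ to C₂ that uses no vertex of C₁ ∪ C₂ as an interior repeated cluster, namely: the set of edges of T with weight > p traversed between C₁ and C₂ is exactly the edge set of the unique path from the vertex [C₁] to [C₂] in T^p. -/
open SimpleGraph

variable {V : Type*}

/-!
An edge `e` lies on the path of the tree `T` from `x` to `y` iff deleting it from `T` separates
`x` from `y`. When `w e > p`, the cycle property of the minimal spanning tree says that every edge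
of weight `≤ p` joins two vertices that are still connected in `T - e`. Hence separating `x` from
`y` in `T - e` is the same as separating them in the graph of all light edges together with the
heavy edges of `T` other than `e`, and it is unaffected by moving `x` and `y` inside their
`p`-clusters.
-/

namespace SimpleGraph

variable {G H : SimpleGraph V}

lemma Reachable.of_forall_adj_reachable (h : ∀ ⦃u v : V⦄, G.Adj u v → H.Reachable u v)
    {x y : V} (hxy : G.Reachable x y) : H.Reachable x y := by
  obtain ⟨W⟩ := hxy
  induction W with
  | nil => exact .rfl
  | cons hadj _ ih => exact (h hadj).trans ih

lemma Reachable.deleteEdges_left_or_right {a b z : V} (h : G.Reachable z a) :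
    (G.deleteEdges {s(a, b)}).Reachable z a ∨ (G.deleteEdges {s(a, b)}).Reachable z b := by
  obtain ⟨W⟩ := h
  induction W with
  | nil => exact .inl .rfl
  | @cons z z₁ a hadj _ ih =>
    by_cases he : s(z, z₁) = s(a, b)
    · rcases Sym2.eq_iff.1 he with ⟨rfl, -⟩ | ⟨rfl, -⟩
      · exact .inl .rfl
      · exact .inr .rfl
    · have hzz₁ : (G.deleteEdges {s(a, b)}).Reachable z z₁ :=
        (deleteEdges_adj.2 ⟨hadj, he⟩).reachable
      exact ih.imp hzz₁.trans hzz₁.trans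

lemma IsAcyclic.mem_edges_iff_not_reachable_deleteEdges (hG : G.IsAcyclic) {x y : V}
    {P : G.Walk x y} (hP : P.IsPath) {e : Sym2 V} :
    e ∈ P.edges ↔ ¬(G.deleteEdges {e}).Reachable x y := by
  classical
  refine ⟨fun he ⟨W⟩ => ?_, P.mem_edges_of_not_reachable_deleteEdges⟩
  let W' : G.Walk x y := W.transfer G fun f hf =>
    edgeSet_mono (G.deleteEdges_le _) (W.edges_subset_edgeSet hf)
  have hP' : W'.bypass = P :=
    congrArg Subtype.val ((hG.subsingleton_path x y).elim ⟨_, W'.bypass_isPath⟩ ⟨P, hP⟩)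
  have heW : e ∈ W.edges := by
    simpa only [W', Walk.edges_transfer] using W'.edges_bypass_subset_edges (hP' ▸ he)
  simpa using W.edges_subset_edgeSet heW

end SimpleGraph

lemma IsSpanningTree.deleteEdges_sup_edge {G T : SimpleGraph V} {u v a b : V}
    (hT : IsSpanningTree G T) (huv : G.Adj u v)
    (hnr : ¬(T.deleteEdges {s(a, b)}).Reachable u v) :
    IsSpanningTree G (T.deleteEdges {s(a, b)} ⊔ edge u v) := by
  set F := T.deleteEdges {s(a, b)}
  have hF : F ≤ F ⊔ edge u v := le_sup_left
  have hconn := hT.2.connected.preconnected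
  -- `u` and `v` fall on different sides of the deleted edge, so `s(u, v)` reconnects `a` and `b`.
  have hab : (F ⊔ edge u v).Reachable a b := by
    have huv' : (F ⊔ edge u v).Reachable u v :=
      ((sup_adj ..).2 (.inr ((edge_adj ..).2 ⟨.inl ⟨rfl, rfl⟩, huv.ne⟩))).reachable
    rcases (hconn u a).deleteEdges_left_or_right (b := b) with hu | hu <;>
      rcases (hconn v a).deleteEdges_left_or_right (b := b) with hv | hv
    · exact absurd (hu.trans hv.symm) hnr
    · exact (hu.mono hF).symm.trans (huv'.trans (hv.mono hF))
    · exact (hv.mono hF).symm.trans (huv'.symm.trans (hu.mono hF))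
    · exact absurd (hu.trans hv.symm) hnr
  refine ⟨sup_le ((T.deleteEdges_le _).trans hT.1) ((edge_le_iff _).2 (.inr huv)), ?_, ?_⟩
  · refine (connected_iff_exists_forall_reachable _).2 ⟨a, fun z => ?_⟩
    rcases (hconn z a).deleteEdges_left_or_right (b := b) with hz | hz
    · exact (hz.mono hF).symm
    · exact hab.trans (hz.mono hF).symm
  · exact (hT.2.isAcyclic.anti (T.deleteEdges_le _)).sup_edge_of_not_reachable hnr

section Weighted

variable [Fintype V] {G T : SimpleGraph V} {w : Sym2 V → ℝ}

lemma graphWeight_of_edgeSet_eq_insert_diff {T' : SimpleGraph V} {e f : Sym2 V}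
    (he : e ∈ T.edgeSet) (hf : f ∉ T.edgeSet) (h : T'.edgeSet = insert f (T.edgeSet \ {e})) :
    graphWeight T' w = graphWeight T w - w e + w f := by
  classical
  have hfin : T'.edgeSet.toFinite.toFinset = insert f (T.edgeSet.toFinite.toFinset.erase e) := by
    ext g
    simp [h, and_comm]
  have hf' : f ∉ T.edgeSet.toFinite.toFinset.erase e := by simp [hf]
  unfold graphWeight
  rw [hfin, Finset.sum_insert hf', ← Finset.sum_erase_add _ _ ((Set.Finite.mem_toFinset _).2 he)]
  ring

/-- The cycle property: otherwise exchanging `e` for `s(u, v)` gives a lighter spanning tree. -/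
lemma IsMST.reachable_deleteEdges_of_lt (hT : IsMST G w T) {u v : V} (huv : G.Adj u v)
    {e : Sym2 V} (hlt : w s(u, v) < w e) : (T.deleteEdges {e}).Reachable u v := by
  induction e with | h a b => ?_
  by_contra hnr
  have he : s(a, b) ∈ T.edgeSet := by
    by_contra he
    rw [deleteEdges_eq_self.2 (Set.disjoint_singleton_right.2 he)] at hnr
    exact hnr (hT.1.2.connected.preconnected u v)
  have hf : s(u, v) ∉ T.edgeSet := fun hf =>
    hnr (deleteEdges_adj.2 ⟨hf, fun h => hlt.ne (congrArg w h)⟩).reachable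
  have hedges : (T.deleteEdges {s(a, b)} ⊔ edge u v).edgeSet =
      insert s(u, v) (T.edgeSet \ {s(a, b)}) := by
    rw [edgeSet_sup, edgeSet_deleteEdges, edgeSet_edge_of_ne huv.ne, Set.union_comm,
      Set.singleton_union]
  have hle := hT.2 _ (hT.1.deleteEdges_sup_edge huv hnr)
  rw [graphWeight_of_edgeSet_eq_insert_diff he hf hedges] at hle
  linarith

lemma IsMST.reachable_deleteEdges_of_reachable_light (hT : IsMST G w T) {p : ℝ} {e : Sym2 V}
    (he : p < w e) {x y : V} (hxy : (G.deleteEdges {f | p < w f}).Reachable x y) :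
    (T.deleteEdges {e}).Reachable x y :=
  hxy.of_forall_adj_reachable fun _ _ huv =>
    have hp : ¬p < w _ := (deleteEdges_adj.1 huv).2
    hT.reachable_deleteEdges_of_lt (deleteEdges_adj.1 huv).1 ((not_lt.1 hp).trans_lt he)

/-- The graph on the left is `T^p` with `e` removed, lifted back to `V`. -/
lemma IsMST.reachable_fromEdgeSet_iff (hT : IsMST G w T) {p : ℝ} {e : Sym2 V} (he : p < w e)
    {x y : V} :
    (fromEdgeSet ({f ∈ G.edgeSet | w f ≤ p} ∪ ({f ∈ T.edgeSet | p < w f} \ {e}))).Reachable x y ↔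
      (T.deleteEdges {e}).Reachable x y := by
  refine ⟨Reachable.of_forall_adj_reachable fun u v huv => ?_, Reachable.mono fun u v huv => ?_⟩
  · obtain ⟨⟨hG, hp⟩ | ⟨⟨hT', -⟩, hne⟩, -⟩ := (fromEdgeSet_adj _).1 huv
    · exact hT.reachable_deleteEdges_of_lt hG (hp.trans_lt he)
    · exact (deleteEdges_adj.2 ⟨hT', hne⟩).reachable
  · obtain ⟨hT', hne⟩ := deleteEdges_adj.1 huv
    refine (fromEdgeSet_adj _).2 ⟨?_, hT'.ne⟩
    rcases le_or_gt (w s(u, v)) p with hp | hp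
    · exact .inl ⟨hT.1.1 hT', hp⟩
    · exact .inr ⟨⟨hT', hp⟩, hne⟩

end Weighted

theorem mst_path_between_clusters_general [Fintype V] (G : SimpleGraph V) (w : Sym2 V → ℝ)
    (T : SimpleGraph V) (hT : IsMST G w T) (p : ℝ) (x y : V) :
    (∀ pth : T.Walk x y, pth.IsPath → ∀ e : Sym2 V,
      ((e ∈ pth.edges ∧ p < w e) ↔
        (e ∈ T.edgeSet ∧ p < w e ∧
          ¬ (SimpleGraph.fromEdgeSet ({f ∈ G.edgeSet | w f ≤ p} ∪
              ({f ∈ T.edgeSet | p < w f} \ {e}))).Reachable x y))) ∧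
    ∀ x' y' : V, (G.deleteEdges {e | p < w e}).Reachable x x' →
      (G.deleteEdges {e | p < w e}).Reachable y y' →
      ∀ (pth : T.Walk x y) (qth : T.Walk x' y'), pth.IsPath → qth.IsPath →
        {e | e ∈ pth.edges ∧ p < w e} = {e | e ∈ qth.edges ∧ p < w e} := by
  have hacyc := hT.1.2.isAcyclic
  refine ⟨fun pth hpth e => ?_, fun x' y' hx hy pth qth hpth hqth => ?_⟩
  · by_cases he : p < w e
    · rw [hT.reachable_fromEdgeSet_iff he, ← hacyc.mem_edges_iff_not_reachable_deleteEdges hpth]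
      exact ⟨fun h => ⟨pth.edges_subset_edgeSet h.1, he, h.1⟩, fun h => ⟨h.2.2, he⟩⟩
    · simp [he]
  · refine Set.ext fun e => and_congr_left fun he => ?_
    rw [hacyc.mem_edges_iff_not_reachable_deleteEdges hpth,
      hacyc.mem_edges_iff_not_reachable_deleteEdges hqth, not_iff_not]
    have hx' := hT.reachable_deleteEdges_of_reachable_light he hx
    have hy' := hT.reachable_deleteEdges_of_reachable_light he hy
    exact ⟨fun h => (hx'.symm.trans h).trans hy', fun h => (hx'.trans h).trans hy'.symm⟩

/-- For two distinct `p`-clusters `C₁ ∋ x` and `C₂ ∋ y`, the set of edges of weight `> p` on the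
`T`-path between the clusters is exactly the edge set of the unique path between the contracted
vertices `[C₁]` and `[C₂]` in the contracted tree `T^p`: an edge of weight `> p` lies on the
`T`-path from `x` to `y` iff it is an edge of `T` whose removal from `T^p` (i.e. from the graph
of all edges of weight `≤ p` together with the edges of `T` of weight `> p`) disconnects `x`
from `y`. Moreover this set of edges depends only on the two clusters, not on the chosen
representatives. -/
theorem mst_path_between_clusters [Fintype V] (G : SimpleGraph V) (hG : G.Connected)
    (w : Sym2 V → ℝ) (hw : Set.InjOn w G.edgeSet)
    (T : SimpleGraph V) (hT : IsMST G w T) (p : ℝ) (x y : V)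
    (hxy : ¬ (G.deleteEdges {e | p < w e}).Reachable x y) :
    (∀ pth : T.Walk x y, pth.IsPath → ∀ e : Sym2 V,
      ((e ∈ pth.edges ∧ p < w e) ↔
        (e ∈ T.edgeSet ∧ p < w e ∧
          ¬ (SimpleGraph.fromEdgeSet ({f ∈ G.edgeSet | w f ≤ p} ∪
              ({f ∈ T.edgeSet | p < w f} \ {e}))).Reachable x y))) ∧
    ∀ x' y' : V, (G.deleteEdges {e | p < w e}).Reachable x x' →
      (G.deleteEdges {e | p < w e}).Reachable y y' →
      ∀ (pth : T.Walk x y) (qth : T.Walk x' y'), pth.IsPath → qth.IsPath →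
        {e | e ∈ pth.edges ∧ p < w e} = {e | e ∈ qth.edges ∧ p < w e} :=
  mst_path_between_clusters_general G w T hT p x y
end
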